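/- arXiv:2211.03908 — 2 statements merged into one kernel-verified Lean document; each statement's English description precedes it below -/
import Mathlib

section
/- Let p₁, p₂ ∈ (0,1) and β ≥ 0 be real numbers, and set a = p₁^β, b = p₂^β, a' = (1−p₁)^β, b' = (1−p₂)^β. Consider the 4×4 real matrix A with rows (a, a', 0, 0), (0, 0, b, b'), (b', b, 0, 0), (0, 0, a', a). Then λ* := ((a + b) + √((a − b)² + 4a'b'))/2 is an eigenvalue of A, and every complex root λ of the characteristic polynomial of A satisfies |λ| ≤ λ*; hence the spectral radius of A equals ((p₁^β + p₂^β) + √((p₁^β − p₂^β)² + 4(1−p₁)^β(1−p₂)^β))/2. -/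
/-!
The characteristic polynomial factors, over any commutative ring, as
`(X² - (a + b) X + (a b - a' b')) (X² - (a - b) X + (a' b' - a b))`. The Perron root `λ*` is the
larger root of the first factor, and `λ* ≥ max a b`. A root of a real monic quadratic
`X² - s X + p` is either real, and then bounded by `t` as soon as `t ≥ |s| / 2` and the quadratic
`u² - |s| u + p` is nonnegative at `t`, or one of a conjugate pair, of modulus `√p`. Both factors
pass these tests with `t = λ*`.
-/

open Polynomial

/-- The spectral radius of a real square matrix: the supremum of the absolute values of the
complex roots of its characteristic polynomial. -/
noncomputable def specRad {n : Type*} [Fintype n] [DecidableEq n] (A : Matrix n n ℝ) : ℝ :=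
  sSup {r : ℝ | ∃ μ ∈ (A.map (algebraMap ℝ ℂ)).charpoly.roots, ‖μ‖ = r}

theorem specRad_eq_of_isRoot_of_forall_norm_le {n : Type*} [Fintype n] [DecidableEq n]
    {A : Matrix n n ℝ} {r : ℝ} (hr₀ : 0 ≤ r) (hr : A.charpoly.IsRoot r)
    (hle : ∀ μ ∈ (A.map (algebraMap ℝ ℂ)).charpoly.roots, ‖μ‖ ≤ r) :
    specRad A = r := by
  have hmem : (r : ℂ) ∈ (A.map (algebraMap ℝ ℂ)).charpoly.roots := by
    rw [mem_roots (Matrix.charpoly_monic _).ne_zero, Matrix.charpoly_map, IsRoot,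
      eval_map_algebraMap, ← Complex.coe_algebraMap, aeval_algebraMap_apply_eq_algebraMap_eval,
      hr.eq_zero, map_zero]
  refine IsGreatest.csSup_eq ⟨⟨r, hmem, ?_⟩, ?_⟩
  · rw [Complex.norm_real, Real.norm_of_nonneg hr₀]
  · rintro _ ⟨μ, hμ, rfl⟩
    exact hle μ hμ

theorem abs_le_of_sq_sub_mul_add_eq_zero {s p t x : ℝ} (hx : x ^ 2 - s * x + p = 0)
    (hs : |s| ≤ 2 * t) (ht : |s| * t ≤ t ^ 2 + p) : |x| ≤ t := by
  by_contra! hxt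
  have hsx : s * x ≤ |s| * |x| := by rw [← abs_mul]; exact le_abs_self _
  nlinarith [sq_abs x]

theorem norm_le_of_sq_sub_mul_add_eq_zero {s p t : ℝ} {μ : ℂ}
    (hμ : μ ^ 2 - s * μ + p = 0) (hs : |s| ≤ 2 * t) (hp : p ≤ t ^ 2)
    (ht : |s| * t ≤ t ^ 2 + p) : ‖μ‖ ≤ t := by
  have hre : μ.re ^ 2 - μ.im ^ 2 - s * μ.re + p = 0 := by
    simpa [sq] using congrArg Complex.re hμ
  have him : μ.im * (2 * μ.re - s) = 0 := by
    have him' := congrArg Complex.im hμ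
    simp only [sq, Complex.sub_im, Complex.add_im, Complex.mul_im, Complex.ofReal_re,
      Complex.ofReal_im, Complex.zero_im] at him'
    linear_combination him'
  rcases mul_eq_zero.mp him with hreal | hvertex
  · rw [← Complex.re_add_im μ, hreal, Complex.ofReal_zero, zero_mul, add_zero,
      Complex.norm_real]
    exact abs_le_of_sq_sub_mul_add_eq_zero (by linear_combination hre + hreal * μ.im) hs ht
  · have hnorm : ‖μ‖ ^ 2 = p := by
      rw [Complex.sq_norm, Complex.normSq_apply]
      linear_combination -hre + μ.re * hvertex
    have ht₀ : 0 ≤ t := by linarith [abs_nonneg s]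
    exact (pow_le_pow_iff_left₀ (norm_nonneg μ) ht₀ two_ne_zero).mp (hnorm ▸ hp)

def transitionMatrix {R : Type*} [Zero R] (a b a' b' : R) : Matrix (Fin 4) (Fin 4) R :=
  !![a, a', 0, 0; 0, 0, b, b'; b', b, 0, 0; 0, 0, a', a]

theorem charpoly_transitionMatrix {R : Type*} [CommRing R] (a b a' b' : R) :
    (transitionMatrix a b a' b').charpoly =
      (X ^ 2 - C (a + b) * X + C (a * b - a' * b')) *
        (X ^ 2 - C (a - b) * X + C (a' * b' - a * b)) := by
  rw [Matrix.charpoly, Matrix.det_succ_row_zero]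
  simp [transitionMatrix, Fin.sum_univ_succ, Matrix.det_fin_three, Fin.succAbove,
    Matrix.charmatrix_apply]
  ring

noncomputable def perronRoot (a b a' b' : ℝ) : ℝ :=
  ((a + b) + √((a - b) ^ 2 + 4 * a' * b')) / 2

theorem perronRoot_sq (a b : ℝ) {a' b' : ℝ} (h : 0 ≤ a' * b') :
    perronRoot a b a' b' ^ 2 = (a + b) * perronRoot a b a' b' - (a * b - a' * b') := by
  have hD := Real.sq_sqrt (by nlinarith [sq_nonneg (a - b)] : 0 ≤ (a - b) ^ 2 + 4 * a' * b')
  unfold perronRoot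
  linear_combination hD / 4

theorem max_le_perronRoot (a b : ℝ) {a' b' : ℝ} (h : 0 ≤ a' * b') :
    max a b ≤ perronRoot a b a' b' := by
  have hD : |a - b| ≤ √((a - b) ^ 2 + 4 * a' * b') := by
    rw [← Real.sqrt_sq_eq_abs]
    exact Real.sqrt_le_sqrt (by linarith)
  obtain ⟨hD₁, hD₂⟩ := abs_le.mp hD
  unfold perronRoot
  exact max_le (by linarith) (by linarith)

theorem isRoot_charpoly_transitionMatrix_perronRoot (a b : ℝ) {a' b' : ℝ} (h : 0 ≤ a' * b') :
    (transitionMatrix a b a' b').charpoly.IsRoot (perronRoot a b a' b') := by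
  rw [IsRoot, charpoly_transitionMatrix, eval_mul]
  refine mul_eq_zero_of_left ?_ _
  simp only [eval_add, eval_sub, eval_mul, eval_pow, eval_X, eval_C]
  linear_combination perronRoot_sq a b h

theorem norm_le_perronRoot_of_mem_roots {a b a' b' : ℝ} (ha : 0 ≤ a) (hb : 0 ≤ b)
    (h : 0 ≤ a' * b') :
    ∀ μ ∈ ((transitionMatrix a b a' b').map (algebraMap ℝ ℂ)).charpoly.roots,
      ‖μ‖ ≤ perronRoot a b a' b' := by
  intro μ hμ
  have ht := perronRoot_sq a b h
  obtain ⟨hat, hbt⟩ := max_le_iff.mp (max_le_perronRoot a b h)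
  rw [mem_roots (Matrix.charpoly_monic _).ne_zero, Matrix.charpoly_map, charpoly_transitionMatrix,
    IsRoot, eval_map_algebraMap, map_mul, mul_eq_zero] at hμ
  rcases hμ with hμ | hμ
  · have hs : |a + b| = a + b := abs_of_nonneg (by positivity)
    exact norm_le_of_sq_sub_mul_add_eq_zero (s := a + b) (p := a * b - a' * b')
      (by simpa using hμ) (by linarith) (by nlinarith) (by nlinarith)
  · obtain ⟨hs, hst⟩ : |a - b| ≤ a + b ∧
        |a - b| * perronRoot a b a' b' ≤ (a + b) * perronRoot a b a' b' - 2 * (a * b) := by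
      rcases le_total a b with hab | hab
      · rw [abs_of_nonpos (sub_nonpos.2 hab)]; constructor <;> nlinarith
      · rw [abs_of_nonneg (sub_nonneg.2 hab)]; constructor <;> nlinarith
    exact norm_le_of_sq_sub_mul_add_eq_zero (s := a - b) (p := a' * b' - a * b)
      (by simpa using hμ) (by linarith) (by nlinarith) (by nlinarith)

theorem four_by_four_transition_matrix_spectral_radius_general
    (p₁ p₂ β : ℝ) (hp₁ : p₁ ∈ Set.Ioo (0:ℝ) 1) (hp₂ : p₂ ∈ Set.Ioo (0:ℝ) 1)
    (a b a' b' : ℝ) (ha : a = p₁ ^ β) (hb : b = p₂ ^ β)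
    (ha' : a' = (1 - p₁) ^ β) (hb' : b' = (1 - p₂) ^ β)
    (A : Matrix (Fin 4) (Fin 4) ℝ)
    (hA : A = !![a, a', 0, 0; 0, 0, b, b'; b', b, 0, 0; 0, 0, a', a]) :
    A.charpoly.IsRoot (((a + b) + Real.sqrt ((a - b) ^ 2 + 4 * a' * b')) / 2) ∧
    (∀ μ ∈ (A.map (algebraMap ℝ ℂ)).charpoly.roots,
      ‖μ‖ ≤ ((a + b) + Real.sqrt ((a - b) ^ 2 + 4 * a' * b')) / 2) ∧
    specRad A = ((p₁ ^ β + p₂ ^ β) +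
      Real.sqrt ((p₁ ^ β - p₂ ^ β) ^ 2 + 4 * (1 - p₁) ^ β * (1 - p₂) ^ β)) / 2 := by
  have ha₀ : 0 ≤ a := ha ▸ Real.rpow_nonneg hp₁.1.le β
  have hb₀ : 0 ≤ b := hb ▸ Real.rpow_nonneg hp₂.1.le β
  have hab' : 0 ≤ a' * b' := ha' ▸ hb' ▸ mul_nonneg
    (Real.rpow_nonneg (sub_nonneg.2 hp₁.2.le) β) (Real.rpow_nonneg (sub_nonneg.2 hp₂.2.le) β)
  change A = transitionMatrix a b a' b' at hA
  subst hA
  have hroot := isRoot_charpoly_transitionMatrix_perronRoot a b hab'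
  have hle := norm_le_perronRoot_of_mem_roots ha₀ hb₀ hab'
  have hnonneg := ha₀.trans ((le_max_left a b).trans (max_le_perronRoot a b hab'))
  refine ⟨hroot, hle, ?_⟩
  subst ha hb ha' hb'
  exact specRad_eq_of_isRoot_of_forall_norm_le hnonneg hroot hle

theorem four_by_four_transition_matrix_spectral_radius
    (p₁ p₂ β : ℝ) (hp₁ : p₁ ∈ Set.Ioo (0:ℝ) 1) (hp₂ : p₂ ∈ Set.Ioo (0:ℝ) 1) (hβ : 0 ≤ β)
    (a b a' b' : ℝ) (ha : a = p₁ ^ β) (hb : b = p₂ ^ β)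
    (ha' : a' = (1 - p₁) ^ β) (hb' : b' = (1 - p₂) ^ β)
    (A : Matrix (Fin 4) (Fin 4) ℝ)
    (hA : A = !![a, a', 0, 0; 0, 0, b, b'; b', b, 0, 0; 0, 0, a', a]) :
    A.charpoly.IsRoot (((a + b) + Real.sqrt ((a - b) ^ 2 + 4 * a' * b')) / 2) ∧
    (∀ μ ∈ (A.map (algebraMap ℝ ℂ)).charpoly.roots,
      ‖μ‖ ≤ ((a + b) + Real.sqrt ((a - b) ^ 2 + 4 * a' * b')) / 2) ∧
    specRad A = ((p₁ ^ β + p₂ ^ β) +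
      Real.sqrt ((p₁ ^ β - p₂ ^ β) ^ 2 + 4 * (1 - p₁) ^ β * (1 - p₂) ^ β)) / 2 :=
  four_by_four_transition_matrix_spectral_radius_general p₁ p₂ β hp₁ hp₂ a b a' b' ha hb ha' hb' A
    hA
end

section
/- Let A be the 4×4 real matrix with rows (1,1,1,1), (1,0,0,0), (1,0,0,0), (1,0,0,0). Then the characteristic polynomial of A equals X⁴ − X³ − 3X² = X²(X² − X − 3), the complex eigenvalues of A are exactly 0, (1 + √13)/2 and (1 − √13)/2, and the spectral radius of A equals (1 + √13)/2. -/
/-! Cofactor expansion along the first row gives the characteristic polynomial. Its quadratic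
factor X² − X − 3 has discriminant 13, so its roots are (1 ± √13)/2, and the spectral radius is
the larger one since |1 − √13| ≤ 1 + √13. -/

open Polynomial

lemma charpoly_petal_transition {R : Type*} [CommRing R] :
    (!![1, 1, 1, 1; 1, 0, 0, 0; 1, 0, 0, 0; 1, 0, 0, 0] : Matrix (Fin 4) (Fin 4) R).charpoly =
      X ^ 4 - X ^ 3 - C 3 * X ^ 2 := by
  have hcharmatrix :
      (!![1, 1, 1, 1; 1, 0, 0, 0; 1, 0, 0, 0; 1, 0, 0, 0] : Matrix (Fin 4) (Fin 4) R).charmatrix =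
        !![X - 1, -1, -1, -1; -1, X, 0, 0; -1, 0, X, 0; -1, 0, 0, X] := by
    ext i j
    fin_cases i <;> fin_cases j <;> simp
  rw [Matrix.charpoly, hcharmatrix]
  simp [Matrix.det_succ_row_zero, Fin.sum_univ_succ, Fin.succAbove, map_ofNat]
  ring

lemma X_sq_sub_X_sub_C_eq_mul {K : Type*} [Field K] [NeZero (2 : K)] {c s : K}
    (hs : s ^ 2 = 1 + 4 * c) :
    (X ^ 2 - X - C c : K[X]) = (X - C ((1 + s) / 2)) * (X - C ((1 - s) / 2)) := by
  have hsum : (1 + s) / 2 + (1 - s) / 2 = 1 := by field_simp; ring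
  have hprod : (1 + s) / 2 * ((1 - s) / 2) = -c := by field_simp; linear_combination -hs
  calc (X ^ 2 - X - C c : K[X])
      = X ^ 2 - C ((1 + s) / 2 + (1 - s) / 2) * X + C ((1 + s) / 2 * ((1 - s) / 2)) := by
        rw [hsum, hprod, map_one, map_neg]; ring
    _ = (X - C ((1 + s) / 2)) * (X - C ((1 - s) / 2)) := by
        rw [map_add, map_mul]; ring

lemma isRoot_X_sq_mul_X_sub_C_mul_X_sub_C_iff {R : Type*} [CommRing R] [IsDomain R] {a b μ : R} :
    (X ^ 2 * ((X - C a) * (X - C b))).IsRoot μ ↔ μ = 0 ∨ μ = a ∨ μ = b := by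
  simp [sub_eq_zero]

lemma specRad_eq_of_isRoot {n : Type*} [Fintype n] [DecidableEq n] {A : Matrix n n ℝ}
    {μ₀ : ℂ} {ρ : ℝ} (hμ₀ : (A.map (algebraMap ℝ ℂ)).charpoly.IsRoot μ₀) (hρ : ‖μ₀‖ = ρ)
    (hle : ∀ μ, (A.map (algebraMap ℝ ℂ)).charpoly.IsRoot μ → ‖μ‖ ≤ ρ) :
    specRad A = ρ := by
  have hne := (Matrix.charpoly_monic (A.map (algebraMap ℝ ℂ))).ne_zero
  refine IsGreatest.csSup_eq ⟨⟨μ₀, (mem_roots hne).2 hμ₀, hρ⟩, ?_⟩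
  rintro r ⟨μ, hμ, rfl⟩
  exact hle μ ((mem_roots hne).1 hμ)

theorem golden_graph_transition_matrix_spectrum
    (A : Matrix (Fin 4) (Fin 4) ℝ)
    (hA : A = !![1, 1, 1, 1; 1, 0, 0, 0; 1, 0, 0, 0; 1, 0, 0, 0]) :
    A.charpoly = X ^ 4 - X ^ 3 - C 3 * X ^ 2 ∧
    A.charpoly = X ^ 2 * (X ^ 2 - X - C 3) ∧
    {μ : ℂ | (A.map (algebraMap ℝ ℂ)).charpoly.IsRoot μ} =
      {0, (((1 + Real.sqrt 13) / 2 : ℝ) : ℂ), (((1 - Real.sqrt 13) / 2 : ℝ) : ℂ)} ∧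
    specRad A = (1 + Real.sqrt 13) / 2 := by
  set s := Real.sqrt 13
  have hs : s ^ 2 = 1 + 4 * 3 := by norm_num [s]
  have hcharpoly : A.charpoly = X ^ 4 - X ^ 3 - C 3 * X ^ 2 := hA ▸ charpoly_petal_transition
  have hfactor : X ^ 4 - X ^ 3 - C 3 * X ^ 2 = X ^ 2 * (X ^ 2 - X - C (3 : ℝ)) := by ring
  have hroots : ∀ μ : ℂ, (A.map (algebraMap ℝ ℂ)).charpoly.IsRoot μ ↔
      μ = 0 ∨ μ = (((1 + s) / 2 : ℝ) : ℂ) ∨ μ = (((1 - s) / 2 : ℝ) : ℂ) := by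
    intro μ
    rw [Matrix.charpoly_map, hcharpoly, hfactor, X_sq_sub_X_sub_C_eq_mul hs]
    simp only [Polynomial.map_mul, Polynomial.map_pow, Polynomial.map_sub, map_X, map_C]
    exact isRoot_X_sq_mul_X_sub_C_mul_X_sub_C_iff
  refine ⟨hcharpoly, hcharpoly.trans hfactor, Set.ext hroots, ?_⟩
  have hpos : 0 ≤ (1 + s) / 2 := by positivity
  refine specRad_eq_of_isRoot ((hroots _).2 (Or.inr (Or.inl rfl)))
    (by rw [Complex.norm_real, Real.norm_of_nonneg hpos]) fun μ hμ ↦ ?_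
  rcases (hroots μ).1 hμ with rfl | rfl | rfl
  · rwa [norm_zero]
  · rw [Complex.norm_real, Real.norm_of_nonneg hpos]
  · have hs_nonneg : 0 ≤ s := Real.sqrt_nonneg 13
    rw [Complex.norm_real, Real.norm_eq_abs, abs_le]
    constructor <;> linarith
end
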